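/- arXiv:2108.12014 — 3 statements merged into one kernel-verified Lean document; each statement's English description precedes it below -/
import Mathlib

section
/- Let 𝒪 and 𝒞 be finite nonempty sets and T ≥ 1 a horizon, with histories H_k = (O₁,…,O_k). Let π : ℝⁿ → History → 𝒞 → ℝ be a parametrized policy such that for every history H and action C, θ ↦ π_θ(C|H) is differentiable, π_θ(C|H) > 0, and ∑_{C∈𝒞} π_θ(C|H) = 1 for all θ; let P(O'|H,C) be a θ-independent transition kernel, ρ an initial distribution on 𝒪, r : 𝒪 → ℝ a reward, and λ ∈ ℝ. Define the trajectory probability Pr_θ[τ] = ρ(O₁) ∏_{k=1}^{T} π_θ(C_k|H_k) ∏_{k=1}^{T−1} P(O_{k+1}|H_k,C_k), the objective J(θ) = ∑_τ Pr_θ[τ] · ∑_{k=1}^{T} λ^{k−1} r(O_k), and the Q-function Q_θ(H_k,C_k) as the conditional expected value of ∑_{k'=k}^{T} λ^{k'−k} r(O_{k'}) given (H_k,C_k) under π_θ and P. Then J is differentiable in θ and ∇_θ J(θ) = ∑_τ Pr_θ[τ] · ∑_{k=1}^{T} λ^{k−1} · Q_θ(H_k,C_k) • ∇_θ log π_θ(C_k|H_k).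 -/
open Finset

/-- The history `H_k = (O₁, …, O_k)` of observations along the observation sequence `O`
up to (0-based) epoch `k`. -/
def hist {𝒪 : Type*} {T : ℕ} (O : Fin T → 𝒪) (k : Fin T) : List 𝒪 :=
  List.ofFn (fun i : Fin (k.1 + 1) =>
    O ⟨i.1, lt_of_le_of_lt (Nat.lt_succ_iff.mp i.2) k.2⟩)

/-- Probability, under policy `pol` and transition kernel `P`, of the continuation
(given as a list of observation–action pairs) of a trajectory after history `H` and
action `C`. -/
def contProb {𝒪 𝒞 : Type*} (pol : List 𝒪 → 𝒞 → ℝ) (P : List 𝒪 → 𝒞 → 𝒪 → ℝ) :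
    List 𝒪 → 𝒞 → List (𝒪 × 𝒞) → ℝ
  | _, _, [] => 1
  | H, C, (o', C') :: rest =>
      P H C o' * pol (H ++ [o']) C' * contProb pol P (H ++ [o']) C' rest

/-- Discounted reward `λ·r(o₁) + λ²·r(o₂) + ⋯` contributed by a list of future
observations. -/
def futReward {𝒪 : Type*} (r : 𝒪 → ℝ) (l : ℝ) : List 𝒪 → ℝ
  | [] => 0
  | o :: rest => l * (r o + futReward r l rest)

/-- The Q-function `Q(H_k, C_k)`: conditional expectation of the discounted reward-to-go
`∑_{k'=k}^{T} λ^{k'-k} r(O_{k'})` given the history `H` (ending in current observation `o`)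
and the action `C`, when `m = T - k` future epochs remain. -/
def Qfun {𝒪 𝒞 : Type*} [Fintype 𝒪] [Fintype 𝒞]
    (pol : List 𝒪 → 𝒞 → ℝ) (P : List 𝒪 → 𝒞 → 𝒪 → ℝ) (r : 𝒪 → ℝ) (l : ℝ)
    (m : ℕ) (H : List 𝒪) (o : 𝒪) (C : 𝒞) : ℝ :=
  r o + ∑ cont : Fin m → 𝒪 × 𝒞,
    contProb pol P H C (List.ofFn cont) * futReward r l (List.ofFn fun j => (cont j).1)

/-- The probability `Pr[τ] = ρ(O₁) ∏_{k=1}^{T} π(C_k|H_k) ∏_{k=1}^{T-1} P(O_{k+1}|H_k,C_k)`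
of a trajectory `τ = (O₁, C₁, …, O_T, C_T)`. -/
def trajProb {𝒪 𝒞 : Type*} [Fintype 𝒪] [Fintype 𝒞] {T : ℕ} (hT : 0 < T)
    (pol : List 𝒪 → 𝒞 → ℝ) (P : List 𝒪 → 𝒞 → 𝒪 → ℝ) (ρ : 𝒪 → ℝ)
    (τ : (Fin T → 𝒪) × (Fin T → 𝒞)) : ℝ :=
  ρ (τ.1 ⟨0, hT⟩) * (∏ k : Fin T, pol (hist τ.1 k) (τ.2 k)) *
    ∏ k : Fin T,
      if h : k.1 + 1 < T then P (hist τ.1 k) (τ.2 k) (τ.1 ⟨k.1 + 1, h⟩) else 1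

/-- The objective `J(θ) = ∑_τ Pr_θ[τ] · ∑_{k=1}^{T} λ^{k-1} r(O_k)`. -/
def Jobj {𝒪 𝒞 : Type*} [Fintype 𝒪] [Fintype 𝒞] {T n : ℕ} (hT : 0 < T)
    (polθ : (Fin n → ℝ) → List 𝒪 → 𝒞 → ℝ) (P : List 𝒪 → 𝒞 → 𝒪 → ℝ) (ρ : 𝒪 → ℝ)
    (r : 𝒪 → ℝ) (l : ℝ) (θ : Fin n → ℝ) : ℝ :=
  ∑ τ : (Fin T → 𝒪) × (Fin T → 𝒞),
    trajProb hT (polθ θ) P ρ τ * ∑ k : Fin T, l ^ (k.1) * r (τ.1 k)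

/-!
Differentiating the factor `∏ₖ π_θ(C_k|H_k)` of `Pr_θ[τ]` gives the likelihood-ratio form
`∇J = ∑_τ Pr_θ[τ] · R(τ) · ∑ₖ ∇log π_θ(C_k|H_k)`, where `R(τ)` is the discounted return.
Fix an epoch `k`. The rewards earned before `k` are functions of `H_k` alone, and the score
`∇log π_θ(C_k|H_k)` has mean zero under `C_k ~ π_θ(·|H_k)`, so they drop out. Summing the
remaining rewards over the continuation of the trajectory after `(H_k, C_k)` turns them into
`λ^k Q_θ(H_k, C_k)`.
-/

section LogDerivative

variable {E : Type*} [NormedAddCommGroup E] [NormedSpace ℝ E] {θ : E}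

lemma smul_fderiv_log {f : E → ℝ} (hf : DifferentiableAt ℝ f θ) (hne : f θ ≠ 0) :
    f θ • fderiv ℝ (fun θ' => Real.log (f θ')) θ = fderiv ℝ f θ := by
  rw [(hf.hasFDerivAt.log hne).fderiv, smul_smul, mul_inv_cancel₀ hne, one_smul]

lemma sum_smul_fderiv_log_eq_zero {ι : Type*} [Fintype ι] {p : E → ι → ℝ}
    (hdiff : ∀ i, DifferentiableAt ℝ (fun θ' => p θ' i) θ) (hne : ∀ i, p θ i ≠ 0)
    (hsum : ∀ θ', ∑ i, p θ' i = 1) :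
    ∑ i, p θ i • fderiv ℝ (fun θ' => Real.log (p θ' i)) θ = 0 := by
  have hconst : (fun θ' => ∑ i, p θ' i) = fun _ => 1 := funext hsum
  simp only [smul_fderiv_log (hdiff _) (hne _)]
  rw [← fderiv_fun_sum fun i _ => hdiff i, hconst, fderiv_const_apply]

lemma hasFDerivAt_finsetProd_of_ne_zero {ι : Type*} {s : Finset ι} {f : ι → E → ℝ}
    (hdiff : ∀ i ∈ s, DifferentiableAt ℝ (f i) θ) (hne : ∀ i ∈ s, f i θ ≠ 0) :
    HasFDerivAt (fun θ' => ∏ i ∈ s, f i θ')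
      ((∏ i ∈ s, f i θ) • ∑ i ∈ s, fderiv ℝ (fun θ' => Real.log (f i θ')) θ) θ := by
  classical
  refine (HasFDerivAt.finsetProd fun i hi => (hdiff i hi).hasFDerivAt).congr_fderiv ?_
  rw [Finset.smul_sum]
  refine Finset.sum_congr rfl fun i hi => ?_
  rw [← smul_fderiv_log (hdiff i hi) (hne i hi), smul_smul, Finset.prod_erase_mul _ _ hi]

end LogDerivative

namespace PolicyGradient

variable {𝒪 𝒞 : Type*}

lemma hist_zero {m : ℕ} (O : Fin (m + 1) → 𝒪) : hist O 0 = [O 0] := rfl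

lemma hist_succ {m : ℕ} (O : Fin (m + 1) → 𝒪) (k : Fin m) :
    hist O k.succ = O 0 :: hist (fun i => O i.succ) k := by
  rw [hist, List.ofFn_succ]
  rfl

lemma sum_pi_fin_succ {X M : Type*} [Fintype X] [AddCommMonoid M] {m : ℕ}
    (F : (Fin (m + 1) → X) → M) :
    ∑ f, F f = ∑ x, ∑ g : Fin m → X, F (Fin.cons x g) := by
  rw [← (Fin.consEquiv fun _ => X).sum_comp, Fintype.sum_prod_type]
  rfl

lemma sum_traj_succ {M : Type*} [Fintype 𝒪] [Fintype 𝒞] [AddCommMonoid M] {m : ℕ}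
    (F : (Fin (m + 1) → 𝒪) × (Fin (m + 1) → 𝒞) → M) :
    ∑ τ, F τ = ∑ x : 𝒪 × 𝒞, ∑ f : Fin m → 𝒪 × 𝒞,
      F (Fin.cons x.1 fun j => (f j).1, Fin.cons x.2 fun j => (f j).2) := by
  rw [← (Equiv.arrowProdEquivProdArrow (Fin (m + 1)) (fun _ => 𝒪) (fun _ => 𝒞)).sum_comp,
    sum_pi_fin_succ]
  refine Finset.sum_congr rfl fun x _ => Finset.sum_congr rfl fun f _ => congrArg F ?_
  ext i <;> cases i using Fin.cases <;> rfl

lemma futReward_ofFn (r : 𝒪 → ℝ) (l : ℝ) {m : ℕ} (O : Fin m → 𝒪) :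
    futReward r l (List.ofFn O) = ∑ j : Fin m, l ^ (j.1 + 1) * r (O j) := by
  induction m with
  | zero => rfl
  | succ m ih =>
    rw [List.ofFn_succ, futReward, ih, Fin.sum_univ_succ, mul_add, Finset.mul_sum]
    simp only [Fin.val_zero, Fin.val_succ, zero_add, pow_succ', pow_zero, one_mul, mul_assoc]

lemma discounted_return_succ (r : 𝒪 → ℝ) (l : ℝ) {m : ℕ} (O : Fin (m + 1) → 𝒪) :
    ∑ k : Fin (m + 1), l ^ k.1 * r (O k) =
      r (O 0) + futReward r l (List.ofFn fun j => O j.succ) := by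
  rw [Fin.sum_univ_succ, futReward_ofFn]
  simp only [Fin.val_zero, pow_zero, one_mul, Fin.val_succ]

section Rollout

variable (pol : List 𝒪 → 𝒞 → ℝ) (P : List 𝒪 → 𝒞 → 𝒪 → ℝ)

lemma contProb_ofFn_eq_prod (H : List 𝒪) {m : ℕ} (O : Fin (m + 1) → 𝒪)
    (A : Fin (m + 1) → 𝒞) :
    contProb pol P (H ++ hist O 0) (A 0) (List.ofFn fun j : Fin m => (O j.succ, A j.succ)) =
      ∏ j : Fin m, P (H ++ hist O j.castSucc) (A j.castSucc) (O j.succ) *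
        pol (H ++ hist O j.succ) (A j.succ) := by
  induction m generalizing H with
  | zero => rfl
  | succ m ih =>
    rw [List.ofFn_succ, contProb, Fin.prod_univ_succ]
    have := ih (H ++ [O 0]) (fun i => O i.succ) (fun i => A i.succ)
    simp only [hist_succ, hist_zero, List.append_assoc, List.cons_append, List.nil_append,
      Fin.castSucc_zero, ← Fin.succ_castSucc] at this ⊢
    rw [this, mul_assoc]

lemma trajProb_succ [Fintype 𝒪] [Fintype 𝒞] (ρ : 𝒪 → ℝ) {m : ℕ} (hm : 0 < m + 1)
    (τ : (Fin (m + 1) → 𝒪) × (Fin (m + 1) → 𝒞)) :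
    trajProb hm pol P ρ τ = ρ (τ.1 0) * pol [τ.1 0] (τ.2 0) *
      contProb pol P [τ.1 0] (τ.2 0) (List.ofFn fun j : Fin m => (τ.1 j.succ, τ.2 j.succ)) := by
  have hprefix : [τ.1 0] = [] ++ hist τ.1 0 := rfl
  rw [hprefix, contProb_ofFn_eq_prod, trajProb, Fin.prod_univ_succ, Fin.prod_univ_castSucc,
    dif_neg (by simp), mul_one, Finset.prod_mul_distrib]
  simp only [Fin.val_castSucc, Nat.add_lt_add_iff_right, Fin.is_lt, dif_pos, List.nil_append,
    ← Fin.succ_mk, Fin.eta, Fin.zero_eta, hist_zero]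
  ring

lemma sum_contProb_succ {M : Type*} [Fintype 𝒪] [Fintype 𝒞] [AddCommMonoid M] [Module ℝ M]
    (H : List 𝒪) (C : 𝒞) {m : ℕ} (Φ : (Fin (m + 1) → 𝒪 × 𝒞) → M) :
    ∑ f, contProb pol P H C (List.ofFn f) • Φ f =
      ∑ x : 𝒪 × 𝒞, (P H C x.1 * pol (H ++ [x.1]) x.2) •
        ∑ g : Fin m → 𝒪 × 𝒞,
          contProb pol P (H ++ [x.1]) x.2 (List.ofFn g) • Φ (Fin.cons x g) := by
  rw [sum_pi_fin_succ]
  simp only [Finset.smul_sum, smul_smul, List.ofFn_succ, Fin.cons_zero, Fin.cons_succ]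
  rfl

variable [Fintype 𝒪] [Fintype 𝒞] {M : Type*} [AddCommGroup M] [Module ℝ M]
  (hpol : ∀ H, ∑ C, pol H C = 1) (hP : ∀ H C, ∑ o, P H C o = 1)

include hpol hP in
lemma sum_contProb_eq_one (m : ℕ) (H : List 𝒪) (C : 𝒞) :
    ∑ f : Fin m → 𝒪 × 𝒞, contProb pol P H C (List.ofFn f) = 1 := by
  induction m generalizing H C with
  | zero => simp [contProb]
  | succ m ih =>
    have := sum_contProb_succ pol P H C (m := m) fun _ => (1 : ℝ)
    simp only [smul_eq_mul, mul_one] at this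
    simp only [this, ih, mul_one, Fintype.sum_prod_type, ← Finset.mul_sum, hpol, hP]

include hpol hP in
lemma sum_contProb_smul_const (m : ℕ) (H : List 𝒪) (C : 𝒞) (v : M) :
    ∑ f : Fin m → 𝒪 × 𝒞, contProb pol P H C (List.ofFn f) • v = v := by
  rw [← Finset.sum_smul, sum_contProb_eq_one pol P hpol hP, one_smul]

include hpol hP in
lemma sum_contProb_smul_return_smul (r : 𝒪 → ℝ) (l : ℝ) (m : ℕ) (H : List 𝒪) (o : 𝒪) (C : 𝒞)
    (v : M) :
    ∑ f : Fin m → 𝒪 × 𝒞, contProb pol P H C (List.ofFn f) •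
        ((r o + futReward r l (List.ofFn fun j => (f j).1)) • v) =
      Qfun pol P r l m H o C • v := by
  simp only [smul_smul]
  rw [← Finset.sum_smul, Qfun]
  simp only [mul_add, Finset.sum_add_distrib, ← Finset.sum_mul,
    sum_contProb_eq_one pol P hpol hP, one_mul]

variable {pol} {g : List 𝒪 → 𝒞 → M} (hg : ∀ H, ∑ C, pol H C • g H C = 0)

include hpol hP hg in
lemma sum_contProb_smul_eq_zero {m : ℕ} (t : Fin m) (H : List 𝒪) (C : 𝒞) :
    ∑ f : Fin m → 𝒪 × 𝒞, contProb pol P H C (List.ofFn f) •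
      g (H ++ hist (fun j => (f j).1) t) (f t).2 = 0 := by
  induction m generalizing H C with
  | zero => exact t.elim0
  | succ m ih =>
    rw [sum_contProb_succ]
    cases t using Fin.cases with
    | zero =>
      simp only [Fin.cons_zero, hist_zero, sum_contProb_smul_const pol P hpol hP, mul_smul,
        Fintype.sum_prod_type, ← Finset.smul_sum, hg, smul_zero, Finset.sum_const_zero]
    | succ t =>
      simp only [Fin.cons_succ, hist_succ, Fin.cons_zero, List.append_cons _ _ (hist _ _), ih,
        smul_zero, Finset.sum_const_zero]

include hpol hP hg in
lemma sum_contProb_smul_futReward_smul (r : 𝒪 → ℝ) (l : ℝ) {m : ℕ} (t : Fin m)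
    (H : List 𝒪) (C : 𝒞) :
    ∑ f : Fin m → 𝒪 × 𝒞, contProb pol P H C (List.ofFn f) •
        (futReward r l (List.ofFn fun j => (f j).1) •
          g (H ++ hist (fun j => (f j).1) t) (f t).2) =
      ∑ f : Fin m → 𝒪 × 𝒞, contProb pol P H C (List.ofFn f) •
        ((l ^ (t.1 + 1) * Qfun pol P r l (m - 1 - t) (H ++ hist (fun j => (f j).1) t) (f t).1
            (f t).2) • g (H ++ hist (fun j => (f j).1) t) (f t).2) := by
  induction m generalizing H C with
  | zero => exact t.elim0
  | succ m ih =>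
    rw [sum_contProb_succ, sum_contProb_succ]
    refine Finset.sum_congr rfl fun x _ => congrArg _ ?_
    cases t using Fin.cases with
    | zero =>
      simp only [Fin.cons_zero, hist_zero, List.ofFn_succ, Fin.cons_succ, futReward, mul_smul,
        smul_comm (contProb _ _ _ _ _) l, ← Finset.smul_sum,
        sum_contProb_smul_return_smul pol P hpol hP, sum_contProb_smul_const pol P hpol hP]
      simp only [Fin.val_zero, zero_add, pow_one, add_tsub_cancel_right, tsub_zero]
    | succ t =>
      simp only [Fin.cons_succ, hist_succ, Fin.cons_zero, List.append_cons _ _ (hist _ _),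
        List.ofFn_succ, futReward, mul_add, add_smul, smul_add, Finset.sum_add_distrib, mul_smul,
        smul_comm (contProb _ _ _ _ _) l, smul_comm (contProb _ _ _ _ _) (r _), ← Finset.smul_sum,
        sum_contProb_smul_eq_zero P hpol hP hg, ih]
      have hidx : m + 1 - 1 - (t.1 + 1) = m - 1 - t := by omega
      simp only [Fin.val_succ, hidx, smul_zero, zero_add, Finset.smul_sum, pow_succ' l (t.1 + 1),
        mul_smul, smul_comm l (contProb _ _ _ _ _)]

include hpol hP hg in
lemma sum_trajProb_smul_return_smul (ρ r : 𝒪 → ℝ) (l : ℝ) {T : ℕ} (hT : 0 < T)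
    (k : Fin T) :
    ∑ τ : (Fin T → 𝒪) × (Fin T → 𝒞), trajProb hT pol P ρ τ •
        ((∑ j : Fin T, l ^ j.1 * r (τ.1 j)) • g (hist τ.1 k) (τ.2 k)) =
      ∑ τ : (Fin T → 𝒪) × (Fin T → 𝒞), trajProb hT pol P ρ τ •
        ((l ^ k.1 * Qfun pol P r l (T - 1 - k) (hist τ.1 k) (τ.1 k) (τ.2 k)) •
          g (hist τ.1 k) (τ.2 k)) := by
  obtain ⟨m, rfl⟩ : ∃ m, T = m + 1 := ⟨T - 1, by omega⟩
  rw [sum_traj_succ, sum_traj_succ]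
  refine Finset.sum_congr rfl fun x _ => ?_
  simp only [trajProb_succ, discounted_return_succ, Fin.cons_zero, Fin.cons_succ, Prod.mk.eta,
    mul_smul, ← Finset.smul_sum]
  congr 2
  cases k using Fin.cases with
  | zero =>
    simp only [Fin.cons_zero, hist_zero, sum_contProb_smul_return_smul pol P hpol hP,
      sum_contProb_smul_const pol P hpol hP, Fin.val_zero, pow_zero, one_smul, tsub_zero,
      add_tsub_cancel_right]
  | succ t =>
    have hidx : m + 1 - 1 - (t.1 + 1) = m - 1 - t := by omega
    have hcentered := sum_contProb_smul_eq_zero P hpol hP hg t [x.1] x.2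
    have hfuture := sum_contProb_smul_futReward_smul P hpol hP hg r l t [x.1] x.2
    simp only [List.singleton_append] at hcentered hfuture
    simp only [Fin.cons_succ, Fin.cons_zero, hist_succ, add_smul, smul_add, Finset.sum_add_distrib,
      smul_comm (contProb _ _ _ _ _) (r _), ← Finset.smul_sum, hcentered, smul_zero, zero_add,
      hfuture, Fin.val_succ, hidx, mul_smul]

end Rollout

lemma hasFDerivAt_Jobj [Fintype 𝒪] [Fintype 𝒞] {T n : ℕ} (hT : 0 < T)
    {polθ : (Fin n → ℝ) → List 𝒪 → 𝒞 → ℝ} {θ : Fin n → ℝ}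
    (hdiff : ∀ H C, DifferentiableAt ℝ (fun θ' => polθ θ' H C) θ)
    (hne : ∀ H C, polθ θ H C ≠ 0) (P : List 𝒪 → 𝒞 → 𝒪 → ℝ) (ρ r : 𝒪 → ℝ) (l : ℝ) :
    HasFDerivAt (Jobj hT polθ P ρ r l)
      (∑ τ : (Fin T → 𝒪) × (Fin T → 𝒞), trajProb hT (polθ θ) P ρ τ •
        ((∑ k : Fin T, l ^ k.1 * r (τ.1 k)) •
          ∑ k : Fin T, fderiv ℝ (fun θ' => Real.log (polθ θ' (hist τ.1 k) (τ.2 k))) θ)) θ := by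
  refine HasFDerivAt.fun_sum fun τ _ => ?_
  have hprod := hasFDerivAt_finsetProd_of_ne_zero (s := Finset.univ)
    (f := fun k θ' => polθ θ' (hist τ.1 k) (τ.2 k)) (fun _ _ => hdiff _ _) (fun _ _ => hne _ _)
  refine (((hprod.const_mul _).mul_const _).mul_const _).congr_fderiv ?_
  simp only [trajProb, smul_smul]
  congr 1
  ring

end PolicyGradient

theorem policy_gradient_Q_form_general
    {𝒪 𝒞 : Type*} [Fintype 𝒪] [Fintype 𝒞]
    {T : ℕ} (hT : 1 ≤ T) {n : ℕ}
    (polθ : (Fin n → ℝ) → List 𝒪 → 𝒞 → ℝ)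
    (hdiff : ∀ (H : List 𝒪) (C : 𝒞), Differentiable ℝ (fun θ : Fin n → ℝ => polθ θ H C))
    (hpos : ∀ (θ : Fin n → ℝ) (H : List 𝒪) (C : 𝒞), 0 < polθ θ H C)
    (hsum : ∀ (θ : Fin n → ℝ) (H : List 𝒪), ∑ C : 𝒞, polθ θ H C = 1)
    (P : List 𝒪 → 𝒞 → 𝒪 → ℝ)
    (hP_sum : ∀ (H : List 𝒪) (C : 𝒞), ∑ o' : 𝒪, P H C o' = 1)
    (ρ : 𝒪 → ℝ)
    (r : 𝒪 → ℝ) (l : ℝ) :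
    Differentiable ℝ (Jobj (𝒪 := 𝒪) (𝒞 := 𝒞) (T := T) hT polθ P ρ r l) ∧
      ∀ θ : Fin n → ℝ,
        fderiv ℝ (Jobj (𝒪 := 𝒪) (𝒞 := 𝒞) (T := T) hT polθ P ρ r l) θ
          = ∑ τ : (Fin T → 𝒪) × (Fin T → 𝒞),
              trajProb hT (polθ θ) P ρ τ •
                ∑ k : Fin T,
                  (l ^ (k.1) *
                      Qfun (polθ θ) P r l (T - 1 - k.1) (hist τ.1 k) (τ.1 k) (τ.2 k)) •
                    fderiv ℝ (fun θ' : Fin n → ℝ =>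
                      Real.log (polθ θ' (hist τ.1 k) (τ.2 k))) θ := by
  have hJ : ∀ θ, HasFDerivAt (Jobj hT polθ P ρ r l) _ θ := fun θ =>
    PolicyGradient.hasFDerivAt_Jobj hT (fun H C => hdiff H C θ) (fun H C => (hpos θ H C).ne')
      P ρ r l
  refine ⟨fun θ => (hJ θ).differentiableAt, fun θ => ?_⟩
  have hscore : ∀ H, ∑ C, polθ θ H C • fderiv ℝ (fun θ' => Real.log (polθ θ' H C)) θ = 0 :=
    fun H => sum_smul_fderiv_log_eq_zero (fun C => hdiff H C θ) (fun C => (hpos θ H C).ne')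
      fun θ' => hsum θ' H
  rw [(hJ θ).fderiv]
  simp only [Finset.smul_sum]
  refine Finset.sum_comm.trans ((Finset.sum_congr rfl fun k _ => ?_).trans Finset.sum_comm)
  exact PolicyGradient.sum_trajProb_smul_return_smul P (hsum θ) hP_sum hscore ρ r l hT k

/-- **Likelihood-ratio policy gradient in Q-function form** (finite-horizon version of
equation (18) in the proof of Theorem 1). In the finite-horizon PoMDP with finite
observation set `𝒪`, finite action set `𝒞`, horizon `T ≥ 1`, positive and
differentiable-in-`θ` parametrized policy `π_θ(C|H)` summing to one, θ-independent
transition kernel `P`, initial distribution `ρ`, reward `r` and discount `l`: the objective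
`J(θ) = ∑_τ Pr_θ[τ] ∑_{k=1}^{T} λ^{k-1} r(O_k)` is differentiable in `θ` and
`∇_θ J(θ) = ∑_τ Pr_θ[τ] ∑_{k=1}^{T} λ^{k-1} Q_θ(H_k,C_k) • ∇_θ log π_θ(C_k|H_k)`. -/
theorem policy_gradient_Q_form
    {𝒪 𝒞 : Type*} [Fintype 𝒪] [Fintype 𝒞] [Nonempty 𝒪] [Nonempty 𝒞]
    {T : ℕ} (hT : 1 ≤ T) {n : ℕ}
    (polθ : (Fin n → ℝ) → List 𝒪 → 𝒞 → ℝ)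
    (hdiff : ∀ (H : List 𝒪) (C : 𝒞), Differentiable ℝ (fun θ : Fin n → ℝ => polθ θ H C))
    (hpos : ∀ (θ : Fin n → ℝ) (H : List 𝒪) (C : 𝒞), 0 < polθ θ H C)
    (hsum : ∀ (θ : Fin n → ℝ) (H : List 𝒪), ∑ C : 𝒞, polθ θ H C = 1)
    (P : List 𝒪 → 𝒞 → 𝒪 → ℝ)
    (hP_nonneg : ∀ (H : List 𝒪) (C : 𝒞) (o' : 𝒪), 0 ≤ P H C o')
    (hP_sum : ∀ (H : List 𝒪) (C : 𝒞), ∑ o' : 𝒪, P H C o' = 1)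
    (ρ : 𝒪 → ℝ) (hρ_nonneg : ∀ o : 𝒪, 0 ≤ ρ o) (hρ_sum : ∑ o : 𝒪, ρ o = 1)
    (r : 𝒪 → ℝ) (l : ℝ) :
    Differentiable ℝ (Jobj (𝒪 := 𝒪) (𝒞 := 𝒞) (T := T) hT polθ P ρ r l) ∧
      ∀ θ : Fin n → ℝ,
        fderiv ℝ (Jobj (𝒪 := 𝒪) (𝒞 := 𝒞) (T := T) hT polθ P ρ r l) θ
          = ∑ τ : (Fin T → 𝒪) × (Fin T → 𝒞),
              trajProb hT (polθ θ) P ρ τ •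
                ∑ k : Fin T,
                  (l ^ (k.1) *
                      Qfun (polθ θ) P r l (T - 1 - k.1) (hist τ.1 k) (τ.1 k) (τ.2 k)) •
                    fderiv ℝ (fun θ' : Fin n → ℝ =>
                      Real.log (polθ θ' (hist τ.1 k) (τ.2 k))) θ :=
  policy_gradient_Q_form_general hT polθ hdiff hpos hsum P hP_sum ρ r l
end

section
/- Let 𝒪 and 𝒞 be finite nonempty sets and T ≥ 1 a horizon, with histories H_k = (O₁,…,O_k). Let π : ℝⁿ → History → 𝒞 → ℝ be a parametrized policy such that for every history H and action C, θ ↦ π_θ(C|H) is differentiable, π_θ(C|H) > 0, and ∑_{C∈𝒞} π_θ(C|H) = 1 for all θ; let P(O'|H,C) be a θ-independent transition kernel, ρ an initial distribution on 𝒪, r : 𝒪 → ℝ a reward, and λ ∈ ℝ. Define the trajectory probability Pr_θ[τ] = ρ(O₁) ∏_{k=1}^{T} π_θ(C_k|H_k) ∏_{k=1}^{T−1} P(O_{k+1}|H_k,C_k), the objective J(θ) = ∑_τ Pr_θ[τ] · ∑_{k=1}^{T} λ^{k−1} r(O_k), the Q-function Q_θ(H_k,C_k) as the conditional expected value of ∑_{k'=k}^{T}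 λ^{k'−k} r(O_{k'}) given (H_k,C_k), the value function V_θ(H_k) = ∑_{C∈𝒞} π_θ(C|H_k) Q_θ(H_k,C), and the advantage A_θ(H_k,C_k) = Q_θ(H_k,C_k) − V_θ(H_k). Then J is differentiable in θ and ∇_θ J(θ) = ∑_τ Pr_θ[τ] · ∑_{k=1}^{T} λ^{k−1} · A_θ(H_k,C_k) • ∇_θ log π_θ(C_k|H_k). -/
open Finset

/-- The value function `V(H_k) = ∑_{C ∈ 𝒞} π(C|H_k) Q(H_k, C)`. -/
def Vfun {𝒪 𝒞 : Type*} [Fintype 𝒪] [Fintype 𝒞]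
    (pol : List 𝒪 → 𝒞 → ℝ) (P : List 𝒪 → 𝒞 → 𝒪 → ℝ) (r : 𝒪 → ℝ) (l : ℝ)
    (m : ℕ) (H : List 𝒪) (o : 𝒪) : ℝ :=
  ∑ C : 𝒞, pol H C * Qfun pol P r l m H o C

/-- The advantage function `A(H_k, C_k) = Q(H_k, C_k) - V(H_k)` (equation (13a)). -/
def Afun {𝒪 𝒞 : Type*} [Fintype 𝒪] [Fintype 𝒞]
    (pol : List 𝒪 → 𝒞 → ℝ) (P : List 𝒪 → 𝒞 → 𝒪 → ℝ) (r : 𝒪 → ℝ) (l : ℝ)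
    (m : ℕ) (H : List 𝒪) (o : 𝒪) (C : 𝒞) : ℝ :=
  Qfun pol P r l m H o C - Vfun pol P r l m H o

section AuxPG
set_option linter.unusedSectionVars false

variable {𝒪 𝒞 : Type*} [Fintype 𝒪] [Fintype 𝒞]

lemma futReward_ofFn (r : 𝒪 → ℝ) (l : ℝ) : ∀ {m : ℕ} (f : Fin m → 𝒪),
    futReward r l (List.ofFn f) = ∑ j : Fin m, l ^ (j.1 + 1) * r (f j) := by
  intro m
  induction m with
  | zero => intro f; simp [futReward]
  | succ m ih =>
    intro f
    rw [List.ofFn_succ, futReward, ih, Fin.sum_univ_succ]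
    rw [mul_add, Finset.mul_sum]
    congr 1
    · norm_num
    · refine Finset.sum_congr rfl fun j _ => ?_
      simp [Fin.val_succ]
      ring

lemma contProb_sum (pol : List 𝒪 → 𝒞 → ℝ) (P : List 𝒪 → 𝒞 → 𝒪 → ℝ)
    (hsum : ∀ H, ∑ C : 𝒞, pol H C = 1) (hP : ∀ H C, ∑ o' : 𝒪, P H C o' = 1) :
    ∀ (m : ℕ) (H : List 𝒪) (C : 𝒞),
      ∑ cont : Fin m → 𝒪 × 𝒞, contProb pol P H C (List.ofFn cont) = 1 := by
  intro m
  induction m with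
  | zero => intro H C; simp [contProb]
  | succ m ih =>
    intro H C
    rw [← Equiv.sum_comp (Fin.consEquiv (fun _ : Fin (m + 1) => 𝒪 × 𝒞)), Fintype.sum_prod_type]
    have h1 : ∀ (x : 𝒪 × 𝒞) (g : Fin m → 𝒪 × 𝒞),
        contProb pol P H C (List.ofFn ((Fin.consEquiv (fun _ : Fin (m + 1) => 𝒪 × 𝒞)) (x, g)))
          = P H C x.1 * pol (H ++ [x.1]) x.2 * contProb pol P (H ++ [x.1]) x.2 (List.ofFn g) := by
      intro x g
      rw [List.ofFn_succ]
      simp [contProb]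
    simp only [h1]
    have h2 : ∀ x : 𝒪 × 𝒞,
        ∑ g : Fin m → 𝒪 × 𝒞, P H C x.1 * pol (H ++ [x.1]) x.2 *
          contProb pol P (H ++ [x.1]) x.2 (List.ofFn g)
          = P H C x.1 * pol (H ++ [x.1]) x.2 := by
      intro x
      rw [← Finset.mul_sum, ih, mul_one]
    simp only [h2]
    rw [Fintype.sum_prod_type]
    have h3 : ∀ o : 𝒪, ∑ c : 𝒞, P H C o * pol (H ++ [o]) c = P H C o := by
      intro o; rw [← Finset.mul_sum, hsum, mul_one]
    simp only [h3]
    exact hP H C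

def glue {X : Type*} {a m T : ℕ} (hTam : T = a + m) (g : Fin a → X) (h : Fin m → X) :
    Fin T → X :=
  fun i => if hi : i.1 < a then g ⟨i.1, hi⟩ else h ⟨i.1 - a, by have := i.2; omega⟩

lemma glue_lt {X : Type*} {a m T : ℕ} (hTam : T = a + m) (g : Fin a → X) (h : Fin m → X)
    (i : Fin T) (hi : i.1 < a) : glue hTam g h i = g ⟨i.1, hi⟩ := dif_pos hi

lemma glue_ge {X : Type*} {a m T : ℕ} (hTam : T = a + m) (g : Fin a → X) (h : Fin m → X)
    (i : Fin T) (hi : a ≤ i.1) :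
    glue hTam g h i = h ⟨i.1 - a, by have := i.2; omega⟩ := dif_neg (by omega)

lemma glue_mk_lt {X : Type*} {a m T : ℕ} (hTam : T = a + m) (g : Fin a → X) (h : Fin m → X)
    {v : ℕ} (hvT : v < T) (hv : v < a) : glue hTam g h ⟨v, hvT⟩ = g ⟨v, hv⟩ := dif_pos hv

lemma glue_mk_ge {X : Type*} {a m T : ℕ} (hTam : T = a + m) (g : Fin a → X) (h : Fin m → X)
    {v : ℕ} (hvT : v < T) (hv : a ≤ v) (h2 : v - a < m) :
    glue hTam g h ⟨v, hvT⟩ = h ⟨v - a, h2⟩ := dif_neg (not_lt.mpr hv)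

def glueEquiv {X : Type*} {a m T : ℕ} (hTam : T = a + m) :
    ((Fin a → X) × (Fin m → X)) ≃ (Fin T → X) where
  toFun p := glue hTam p.1 p.2
  invFun f := (fun i => f ⟨i.1, by have := i.2; omega⟩, fun j => f ⟨a + j.1, by have := j.2; omega⟩)
  left_inv p := by
    obtain ⟨g, h⟩ := p
    refine Prod.ext (funext fun i => ?_) (funext fun j => ?_) <;> dsimp only
    · rw [glue_mk_lt _ _ _ _ i.2]
    · rw [glue_mk_ge _ _ _ _ (by omega) (by omega)]
      exact congrArg h (Fin.ext (by simp))
  right_inv f := by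
    funext i
    dsimp only
    by_cases hi : i.1 < a
    · rw [glue_lt _ _ _ i hi]
    · rw [glue_ge _ _ _ i (by omega)]
      exact congrArg f (Fin.ext (by have := i.2; simp; omega))

lemma sum_glue {X E : Type*} [Fintype X] [AddCommMonoid E] {a m T : ℕ} (hTam : T = a + m)
    (F : (Fin T → X) → E) :
    ∑ f : Fin T → X, F f = ∑ g : Fin a → X, ∑ h : Fin m → X, F (glue hTam g h) := by
  rw [← Equiv.sum_comp (glueEquiv (X := X) hTam) F, Fintype.sum_prod_type]
  rfl

lemma sum_fin_split {M : Type*} [AddCommMonoid M] {a m T : ℕ} (hTam : T = a + m)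
    (f : Fin T → M) :
    ∑ i, f i = (∑ i : Fin a, f ⟨i.1, by have := i.2; omega⟩)
      + ∑ j : Fin m, f ⟨a + j.1, by have := j.2; omega⟩ := by
  subst hTam
  rw [Fin.sum_univ_add]
  rfl

lemma prod_fin_split {M : Type*} [CommMonoid M] {a m T : ℕ} (hTam : T = a + m)
    (f : Fin T → M) :
    ∏ i, f i = (∏ i : Fin a, f ⟨i.1, by have := i.2; omega⟩)
      * ∏ j : Fin m, f ⟨a + j.1, by have := j.2; omega⟩ := by
  subst hTam
  rw [Fin.prod_univ_add]
  rfl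

lemma sum_pair {M : Type*} [AddCommMonoid M] {m : ℕ} (Φ : (Fin m → 𝒪 × 𝒞) → M) :
    ∑ Of : Fin m → 𝒪, ∑ Cf : Fin m → 𝒞, Φ (fun j => (Of j, Cf j))
      = ∑ cont : Fin m → 𝒪 × 𝒞, Φ cont := by
  rw [← Equiv.sum_comp (Equiv.arrowProdEquivProdArrow (Fin m) (fun _ => 𝒪) (fun _ => 𝒞)).symm Φ,
    Fintype.sum_prod_type]
  rfl

lemma hist_congr {T : ℕ} (O O' : Fin T → 𝒪) (k : Fin T)
    (h : ∀ j : Fin T, j.1 ≤ k.1 → O j = O' j) : hist O k = hist O' k := by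
  unfold hist
  congr 1
  funext i
  exact h _ (Nat.lt_succ_iff.mp i.2)

lemma hist_succ {T : ℕ} (O : Fin T → 𝒪) (k : ℕ) (hk : k + 1 < T) :
    hist O ⟨k + 1, hk⟩ = hist O ⟨k, by omega⟩ ++ [O ⟨k + 1, hk⟩] := by
  unfold hist
  rw [List.ofFn_succ' (fun i : Fin (k + 1 + 1) => O ⟨i.1, by have := i.2; omega⟩)]
  rw [List.concat_eq_append]
  congr 1

/-- Probability of the trajectory prefix up to epoch `k`, excluding the policy factor at
epoch `k`. -/
def prefProb' {T : ℕ} (pol : List 𝒪 → 𝒞 → ℝ) (P : List 𝒪 → 𝒞 → 𝒪 → ℝ) (ρ : 𝒪 → ℝ)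
    (O : Fin T → 𝒪) (C : Fin T → 𝒞) (k : Fin T) : ℝ :=
  ρ (O ⟨0, Nat.lt_of_le_of_lt (Nat.zero_le _) k.2⟩) *
    (∏ j : Fin k.1, pol (hist O ⟨j.1, j.2.trans k.2⟩) (C ⟨j.1, j.2.trans k.2⟩)) *
    ∏ j : Fin k.1,
      P (hist O ⟨j.1, j.2.trans k.2⟩) (C ⟨j.1, j.2.trans k.2⟩)
        (O ⟨j.1 + 1, Nat.lt_of_le_of_lt j.2 k.2⟩)

/-- Probability of the trajectory prefix up to epoch `k`, including the policy factor at
epoch `k`. -/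
def prefProb {T : ℕ} (pol : List 𝒪 → 𝒞 → ℝ) (P : List 𝒪 → 𝒞 → 𝒪 → ℝ) (ρ : 𝒪 → ℝ)
    (O : Fin T → 𝒪) (C : Fin T → 𝒞) (k : Fin T) : ℝ :=
  prefProb' pol P ρ O C k * pol (hist O k) (C k)

lemma prefProb'_congr {T : ℕ} (pol : List 𝒪 → 𝒞 → ℝ) (P : List 𝒪 → 𝒞 → 𝒪 → ℝ) (ρ : 𝒪 → ℝ)
    (O O' : Fin T → 𝒪) (C C' : Fin T → 𝒞) (k : Fin T)
    (hO : ∀ j : Fin T, j.1 ≤ k.1 → O j = O' j) (hC : ∀ j : Fin T, j.1 < k.1 → C j = C' j) :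
    prefProb' pol P ρ O C k = prefProb' pol P ρ O' C' k := by
  unfold prefProb'
  rw [hO _ (Nat.zero_le _)]
  congr 1
  · congr 1
    refine Finset.prod_congr rfl fun j _ => ?_
    rw [hist_congr O O' _ fun i hi => hO i (hi.trans (Nat.le_of_lt j.2)),
      hC _ j.2]
  · refine Finset.prod_congr rfl fun j _ => ?_
    rw [hist_congr O O' _ fun i hi => hO i (hi.trans (Nat.le_of_lt j.2)),
      hC _ j.2, hO _ (Nat.succ_le_of_lt j.2)]

lemma prefProb_congr {T : ℕ} (pol : List 𝒪 → 𝒞 → ℝ) (P : List 𝒪 → 𝒞 → 𝒪 → ℝ) (ρ : 𝒪 → ℝ)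
    (O O' : Fin T → 𝒪) (C C' : Fin T → 𝒞) (k : Fin T)
    (hO : ∀ j : Fin T, j.1 ≤ k.1 → O j = O' j) (hC : ∀ j : Fin T, j.1 ≤ k.1 → C j = C' j) :
    prefProb pol P ρ O C k = prefProb pol P ρ O' C' k := by
  unfold prefProb
  rw [prefProb'_congr pol P ρ O O' C C' k hO fun j hj => hC j (Nat.le_of_lt hj),
    hist_congr O O' k hO, hC k le_rfl]

lemma prefProb_succ {T : ℕ} (pol : List 𝒪 → 𝒞 → ℝ) (P : List 𝒪 → 𝒞 → 𝒪 → ℝ) (ρ : 𝒪 → ℝ)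
    (O : Fin T → 𝒪) (C : Fin T → 𝒞) (k : ℕ) (hk : k + 1 < T) :
    prefProb pol P ρ O C ⟨k + 1, hk⟩
      = prefProb pol P ρ O C ⟨k, by omega⟩ *
          P (hist O ⟨k, by omega⟩) (C ⟨k, by omega⟩) (O ⟨k + 1, hk⟩) *
          pol (hist O ⟨k + 1, hk⟩) (C ⟨k + 1, hk⟩) := by
  unfold prefProb prefProb'
  rw [Fin.prod_univ_castSucc
    (fun j : Fin (k + 1) => pol (hist O ⟨j.1, _⟩) (C ⟨j.1, _⟩))]
  rw [Fin.prod_univ_castSucc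
    (fun j : Fin (k + 1) => P (hist O ⟨j.1, _⟩) (C ⟨j.1, _⟩) (O ⟨j.1 + 1, _⟩))]
  simp only [Fin.coe_castSucc, Fin.val_last]
  ring

lemma trajProb_split {T : ℕ} (hT : 0 < T) (pol : List 𝒪 → 𝒞 → ℝ)
    (P : List 𝒪 → 𝒞 → 𝒪 → ℝ) (ρ : 𝒪 → ℝ) :
    ∀ (m : ℕ) (O : Fin T → 𝒪) (C : Fin T → 𝒞) (k : Fin T) (hk : k.1 + 1 + m = T),
      trajProb hT pol P ρ (O, C)
        = prefProb pol P ρ O C k *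
            contProb pol P (hist O k) (C k)
              (List.ofFn fun j : Fin m =>
                (O ⟨k.1 + 1 + j.1, by have := j.2; omega⟩,
                 C ⟨k.1 + 1 + j.1, by have := j.2; omega⟩)) := by
  intro m
  induction m with
  | zero =>
    intro O C k hk
    simp only [List.ofFn_zero, contProb, mul_one]
    unfold trajProb prefProb prefProb'
    rw [prod_fin_split (a := k.1) (m := 1) (by omega)
      (fun j : Fin T => pol (hist O j) (C j))]
    rw [prod_fin_split (a := k.1) (m := 1) (by omega)
      (fun j : Fin T => if h : j.1 + 1 < T then P (hist O j) (C j) (O ⟨j.1 + 1, h⟩) else 1)]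
    rw [Fin.prod_univ_one, Fin.prod_univ_one]
    simp only [Fin.val_zero, add_zero, Fin.eta]
    rw [dif_neg (by omega : ¬(k.1 + 1 < T))]
    have e2 : (∏ i : Fin k.1,
        if h : (i.1 : ℕ) + 1 < T then
          P (hist O ⟨i.1, i.2.trans k.2⟩) (C ⟨i.1, i.2.trans k.2⟩) (O ⟨i.1 + 1, h⟩)
        else 1)
        = ∏ i : Fin k.1,
            P (hist O ⟨i.1, i.2.trans k.2⟩) (C ⟨i.1, i.2.trans k.2⟩)
              (O ⟨i.1 + 1, Nat.lt_of_le_of_lt i.2 k.2⟩) :=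
      Finset.prod_congr rfl fun i _ => dif_pos (by have := i.2; omega)
    rw [e2]
    ring
  | succ m ih =>
    intro O C k hk
    have hk1 : k.1 + 1 < T := by omega
    have hmain := ih O C ⟨k.1 + 1, hk1⟩ (by show k.1 + 1 + 1 + m = T; omega)
    rw [hmain]
    rw [prefProb_succ pol P ρ O C k.1 hk1]
    simp only [Fin.eta]
    rw [List.ofFn_succ]
    simp only [contProb]
    simp only [Fin.val_zero, add_zero]
    rw [← hist_succ O k.1 hk1]
    have efn : (List.ofFn fun i : Fin m =>
          ((O ⟨k.1 + 1 + 1 + i.1, by have := i.2; omega⟩ : 𝒪),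
           (C ⟨k.1 + 1 + 1 + i.1, by have := i.2; omega⟩ : 𝒞)))
        = List.ofFn fun i : Fin m =>
            ((O ⟨k.1 + 1 + (i.succ : Fin (m + 1)).1, by have := i.2; omega⟩ : 𝒪),
             (C ⟨k.1 + 1 + (i.succ : Fin (m + 1)).1, by have := i.2; omega⟩ : 𝒞)) := by
      refine congrArg List.ofFn (funext fun i => ?_)
      have hv : k.1 + 1 + 1 + i.1 = k.1 + 1 + (i.succ : Fin (m + 1)).1 := by
        simp [Fin.val_succ]
        omega
      exact Prod.ext (congrArg O (Fin.ext hv)) (congrArg C (Fin.ext hv))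
    rw [efn]
    ring

lemma pol_smul_fderiv_log {n : ℕ} (f : (Fin n → ℝ) → ℝ) (hf : Differentiable ℝ f)
    (θ : Fin n → ℝ) (hfθ : 0 < f θ) :
    f θ • fderiv ℝ (fun θ' => Real.log (f θ')) θ = fderiv ℝ f θ := by
  rw [((hf θ).hasFDerivAt.log hfθ.ne').fderiv, smul_smul, mul_inv_cancel₀ hfθ.ne', one_smul]

lemma sum_fderiv_pol_eq_zero {n : ℕ} (polθ : (Fin n → ℝ) → List 𝒪 → 𝒞 → ℝ)
    (hdiff : ∀ H C, Differentiable ℝ (fun θ : Fin n → ℝ => polθ θ H C))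
    (hsum : ∀ θ H, ∑ C : 𝒞, polθ θ H C = 1) (H : List 𝒪) (θ : Fin n → ℝ) :
    ∑ c : 𝒞, fderiv ℝ (fun θ' => polθ θ' H c) θ = 0 := by
  have h1 : HasFDerivAt (fun θ' => ∑ c : 𝒞, polθ θ' H c)
      (∑ c : 𝒞, fderiv ℝ (fun θ' => polθ θ' H c) θ) θ :=
    HasFDerivAt.fun_sum fun c _ => (hdiff H c θ).hasFDerivAt
  have h2 : (fun θ' : Fin n → ℝ => ∑ c : 𝒞, polθ θ' H c) = fun _ => (1 : ℝ) :=
    funext fun θ' => hsum θ' H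
  rw [h2] at h1
  exact h1.unique (hasFDerivAt_const 1 θ)

lemma hasFDerivAt_trajProb {T n : ℕ} (hT : 0 < T)
    (polθ : (Fin n → ℝ) → List 𝒪 → 𝒞 → ℝ)
    (hdiff : ∀ H C, Differentiable ℝ (fun θ : Fin n → ℝ => polθ θ H C))
    (hpos : ∀ θ H C, 0 < polθ θ H C)
    (P : List 𝒪 → 𝒞 → 𝒪 → ℝ) (ρ : 𝒪 → ℝ)
    (τ : (Fin T → 𝒪) × (Fin T → 𝒞)) (θ : Fin n → ℝ) :
    HasFDerivAt (fun θ' => trajProb hT (polθ θ') P ρ τ)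
      (trajProb hT (polθ θ) P ρ τ •
        ∑ k : Fin T, fderiv ℝ (fun θ' => Real.log (polθ θ' (hist τ.1 k) (τ.2 k))) θ) θ := by
  classical
  have hF : HasFDerivAt (fun θ' => ∏ k : Fin T, polθ θ' (hist τ.1 k) (τ.2 k))
      (∑ k : Fin T, (∏ j ∈ Finset.univ.erase k, polθ θ (hist τ.1 j) (τ.2 j)) •
        fderiv ℝ (fun θ' => polθ θ' (hist τ.1 k) (τ.2 k)) θ) θ :=
    HasFDerivAt.finset_prod fun i _ => (hdiff _ _ θ).hasFDerivAt
  have hD : (∑ k : Fin T, (∏ j ∈ Finset.univ.erase k, polθ θ (hist τ.1 j) (τ.2 j)) •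
        fderiv ℝ (fun θ' => polθ θ' (hist τ.1 k) (τ.2 k)) θ)
      = (∏ k : Fin T, polθ θ (hist τ.1 k) (τ.2 k)) •
          ∑ k : Fin T, fderiv ℝ (fun θ' => Real.log (polθ θ' (hist τ.1 k) (τ.2 k))) θ := by
    rw [Finset.smul_sum]
    refine Finset.sum_congr rfl fun k _ => ?_
    rw [← pol_smul_fderiv_log (fun θ' => polθ θ' (hist τ.1 k) (τ.2 k)) (hdiff _ _) θ
      (hpos θ _ _), smul_smul]
    congr 1
    rw [← Finset.mul_prod_erase Finset.univ _ (Finset.mem_univ k)]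
    ring
  rw [hD] at hF
  have hfin := (hF.const_mul (ρ (τ.1 ⟨0, hT⟩))).mul_const
    (∏ k : Fin T, if h : k.1 + 1 < T then P (hist τ.1 k) (τ.2 k) (τ.1 ⟨k.1 + 1, h⟩) else 1)
  have heq : (∏ k : Fin T, if h : k.1 + 1 < T then P (hist τ.1 k) (τ.2 k) (τ.1 ⟨k.1 + 1, h⟩) else 1) •
      (ρ (τ.1 ⟨0, hT⟩) • ((∏ k : Fin T, polθ θ (hist τ.1 k) (τ.2 k)) •
        ∑ k : Fin T, fderiv ℝ (fun θ' => Real.log (polθ θ' (hist τ.1 k) (τ.2 k))) θ))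
      = trajProb hT (polθ θ) P ρ τ •
          ∑ k : Fin T, fderiv ℝ (fun θ' => Real.log (polθ θ' (hist τ.1 k) (τ.2 k))) θ := by
    rw [smul_smul, smul_smul]
    unfold trajProb
    congr 1
    ring
  rw [heq] at hfin
  exact hfin

lemma hasFDerivAt_Jobj {T n : ℕ} (hT : 0 < T)
    (polθ : (Fin n → ℝ) → List 𝒪 → 𝒞 → ℝ)
    (hdiff : ∀ H C, Differentiable ℝ (fun θ : Fin n → ℝ => polθ θ H C))
    (hpos : ∀ θ H C, 0 < polθ θ H C)
    (P : List 𝒪 → 𝒞 → 𝒪 → ℝ) (ρ : 𝒪 → ℝ) (r : 𝒪 → ℝ) (l : ℝ) (θ : Fin n → ℝ) :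
    HasFDerivAt (Jobj (𝒪 := 𝒪) (𝒞 := 𝒞) (T := T) hT polθ P ρ r l)
      (∑ τ : (Fin T → 𝒪) × (Fin T → 𝒞), (∑ k : Fin T, l ^ k.1 * r (τ.1 k)) •
        (trajProb hT (polθ θ) P ρ τ •
          ∑ k : Fin T, fderiv ℝ (fun θ' => Real.log (polθ θ' (hist τ.1 k) (τ.2 k))) θ)) θ :=
  HasFDerivAt.fun_sum fun τ _ =>
    (hasFDerivAt_trajProb hT polθ hdiff hpos P ρ τ θ).mul_const _

lemma claim_k {T n : ℕ} [Nonempty 𝒪] [Nonempty 𝒞] (hT : 0 < T)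
    (polθ : (Fin n → ℝ) → List 𝒪 → 𝒞 → ℝ)
    (hdiff : ∀ H C, Differentiable ℝ (fun θ : Fin n → ℝ => polθ θ H C))
    (hpos : ∀ θ H C, 0 < polθ θ H C)
    (hsum : ∀ θ H, ∑ C : 𝒞, polθ θ H C = 1)
    (P : List 𝒪 → 𝒞 → 𝒪 → ℝ) (hP_sum : ∀ H C, ∑ o' : 𝒪, P H C o' = 1)
    (ρ : 𝒪 → ℝ) (r : 𝒪 → ℝ) (l : ℝ) (θ : Fin n → ℝ) (k : Fin T) :
    ∑ τ : (Fin T → 𝒪) × (Fin T → 𝒞),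
      (trajProb hT (polθ θ) P ρ τ *
        ((∑ j : Fin T, l ^ j.1 * r (τ.1 j)) -
          l ^ k.1 * Afun (polθ θ) P r l (T - 1 - k.1) (hist τ.1 k) (τ.1 k) (τ.2 k))) •
        fderiv ℝ (fun θ' => Real.log (polθ θ' (hist τ.1 k) (τ.2 k))) θ = 0 := by
  classical
  set pol := polθ θ with hpol
  set m := T - 1 - k.1 with hm
  have hTam : T = (k.1 + 1) + m := by have := k.2; omega
  set Of0 : Fin m → 𝒪 := fun _ => Classical.arbitrary 𝒪 with hOf0
  set Cf0 : Fin m → 𝒞 := fun _ => Classical.arbitrary 𝒞 with hCf0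
  have hkla : k.1 < k.1 + 1 := Nat.lt_succ_self _
  rw [Fintype.sum_prod_type]
  simp only [sum_glue hTam]
  refine Finset.sum_eq_zero fun Op _ => ?_
  rw [Finset.sum_comm]
  set O0 : Fin T → 𝒪 := glue hTam Op Of0 with hO0
  set H : List 𝒪 := hist O0 k with hH
  set ok : 𝒪 := Op ⟨k.1, hkla⟩ with hok
  set past : ℝ := ∑ j : Fin k.1, l ^ j.1 * r (Op ⟨j.1, Nat.lt_succ_of_lt j.2⟩) with hpast
  set V : ℝ := Vfun pol P r l m H ok with hV
  set pv : ℝ := past + l ^ k.1 * V with hpv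
  have hGO : ∀ (Of : Fin m → 𝒪) (j : Fin T), j.1 ≤ k.1 → glue hTam Op Of j = O0 j := by
    intro Of j hj
    rw [hO0, glue_lt hTam Op Of j (by omega), glue_lt hTam Op Of0 j (by omega)]
  have hH' : ∀ Of : Fin m → 𝒪, hist (glue hTam Op Of) k = H :=
    fun Of => (hist_congr _ _ k (hGO Of)).trans rfl
  have hok' : ∀ Of : Fin m → 𝒪, glue hTam Op Of k = ok :=
    fun Of => glue_lt hTam Op Of k hkla
  have hck : ∀ (Cp : Fin (k.1 + 1) → 𝒞) (Cf : Fin m → 𝒞),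
      glue hTam Cp Cf k = Cp ⟨k.1, hkla⟩ :=
    fun Cp Cf => glue_lt hTam Cp Cf k hkla
  have hinner : ∀ Cp : Fin (k.1 + 1) → 𝒞,
      (∑ Of : Fin m → 𝒪, ∑ Cf : Fin m → 𝒞,
        (trajProb hT pol P ρ (glue hTam Op Of, glue hTam Cp Cf) *
          ((∑ j : Fin T, l ^ j.1 * r (glue hTam Op Of j)) -
            l ^ k.1 * Afun pol P r l m (hist (glue hTam Op Of) k)
              (glue hTam Op Of k) (glue hTam Cp Cf k))) •
          fderiv ℝ (fun θ' =>
            Real.log (polθ θ' (hist (glue hTam Op Of) k) (glue hTam Cp Cf k))) θ)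
      = (prefProb pol P ρ O0 (glue hTam Cp Cf0) k * pv) •
          fderiv ℝ (fun θ' => Real.log (polθ θ' H (Cp ⟨k.1, hkla⟩))) θ := by
    intro Cp
    set c : 𝒞 := Cp ⟨k.1, hkla⟩ with hc
    set Q : ℝ := Qfun pol P r l m H ok c with hQdef
    set PP : ℝ := prefProb pol P ρ O0 (glue hTam Cp Cf0) k with hPP
    have htraj : ∀ (Of : Fin m → 𝒪) (Cf : Fin m → 𝒞),
        trajProb hT pol P ρ (glue hTam Op Of, glue hTam Cp Cf)
          = PP * contProb pol P H c (List.ofFn fun j => (Of j, Cf j)) := by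
      intro Of Cf
      rw [trajProb_split hT pol P ρ m (glue hTam Op Of) (glue hTam Cp Cf) k (by omega)]
      have h1 : prefProb pol P ρ (glue hTam Op Of) (glue hTam Cp Cf) k = PP := by
        rw [hPP, hO0]
        exact prefProb_congr pol P ρ _ _ _ _ k
          (fun j hj => by
            rw [glue_lt hTam Op Of j (by omega), glue_lt hTam Op Of0 j (by omega)])
          (fun j hj => by
            rw [glue_lt hTam Cp Cf j (by omega), glue_lt hTam Cp Cf0 j (by omega)])
      have h2 : (List.ofFn fun j : Fin m =>
            (glue hTam Op Of ⟨k.1 + 1 + j.1, by have := j.2; omega⟩,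
             glue hTam Cp Cf ⟨k.1 + 1 + j.1, by have := j.2; omega⟩))
          = List.ofFn fun j : Fin m => (Of j, Cf j) := by
        refine congrArg List.ofFn (funext fun j => ?_)
        rw [glue_mk_ge hTam Op Of _ (by omega) (by have := j.2; omega),
          glue_mk_ge hTam Cp Cf _ (by omega) (by have := j.2; omega)]
        have hj : k.1 + 1 + j.1 - (k.1 + 1) = j.1 := by omega
        exact Prod.ext (congrArg Of (Fin.ext hj)) (congrArg Cf (Fin.ext hj))
      rw [h1, hH' Of, hck Cp Cf, h2, ← hc]
    have hR : ∀ Of : Fin m → 𝒪,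
        (∑ j : Fin T, l ^ j.1 * r (glue hTam Op Of j))
          = past + l ^ k.1 * r ok + l ^ k.1 * futReward r l (List.ofFn Of) := by
      intro Of
      rw [sum_fin_split hTam (fun j : Fin T => l ^ j.1 * r (glue hTam Op Of j))]
      simp only [Fin.val_mk]
      have h1 : (∑ j : Fin (k.1 + 1),
            l ^ j.1 * r (glue hTam Op Of ⟨j.1, by have := j.2; omega⟩))
          = past + l ^ k.1 * r ok := by
        rw [Fin.sum_univ_castSucc (fun j : Fin (k.1 + 1) =>
          l ^ j.1 * r (glue hTam Op Of ⟨j.1, by have := j.2; omega⟩))]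
        simp only [Fin.coe_castSucc, Fin.val_last]
        congr 1
        · rw [hpast]
          refine Finset.sum_congr rfl fun j _ => ?_
          rw [glue_mk_lt hTam Op Of _ (by have := j.2; omega)]
        · rw [glue_mk_lt hTam Op Of _ hkla, hok]
      have h2 : (∑ j : Fin m,
            l ^ (k.1 + 1 + j.1) * r (glue hTam Op Of ⟨k.1 + 1 + j.1, by have := j.2; omega⟩))
          = l ^ k.1 * futReward r l (List.ofFn Of) := by
        rw [futReward_ofFn, Finset.mul_sum]
        refine Finset.sum_congr rfl fun j _ => ?_
        have hjm : k.1 + 1 + j.1 - (k.1 + 1) < m := by have := j.2; omega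
        rw [glue_mk_ge hTam Op Of _ (by omega) hjm]
        rw [show (⟨k.1 + 1 + j.1 - (k.1 + 1), hjm⟩ : Fin m) = j from
          Fin.ext (show k.1 + 1 + j.1 - (k.1 + 1) = j.1 by omega)]
        rw [show k.1 + 1 + j.1 = k.1 + (j.1 + 1) by omega, pow_add, mul_assoc]
      rw [h1, h2]
    have hQsum : (∑ Of : Fin m → 𝒪, ∑ Cf : Fin m → 𝒞,
          contProb pol P H c (List.ofFn fun j => (Of j, Cf j)) *
            futReward r l (List.ofFn Of))
        = Q - r ok := by
      have h1 : (∑ Of : Fin m → 𝒪, ∑ Cf : Fin m → 𝒞,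
            contProb pol P H c (List.ofFn fun j => (Of j, Cf j)) *
              futReward r l (List.ofFn Of))
          = ∑ cont : Fin m → 𝒪 × 𝒞, contProb pol P H c (List.ofFn cont) *
              futReward r l (List.ofFn fun j => (cont j).1) :=
        sum_pair (fun cont => contProb pol P H c (List.ofFn cont) *
          futReward r l (List.ofFn fun j => (cont j).1))
      rw [h1, hQdef]
      unfold Qfun
      ring
    have honesum : (∑ Of : Fin m → 𝒪, ∑ Cf : Fin m → 𝒞,
          contProb pol P H c (List.ofFn fun j => (Of j, Cf j))) = 1 :=
      (sum_pair (fun cont => contProb pol P H c (List.ofFn cont))).trans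
        (contProb_sum pol P (fun H' => hsum θ H') hP_sum m H c)
    have hterm : ∀ (Of : Fin m → 𝒪) (Cf : Fin m → 𝒞),
        (trajProb hT pol P ρ (glue hTam Op Of, glue hTam Cp Cf) *
          ((∑ j : Fin T, l ^ j.1 * r (glue hTam Op Of j)) -
            l ^ k.1 * Afun pol P r l m (hist (glue hTam Op Of) k)
              (glue hTam Op Of k) (glue hTam Cp Cf k))) •
          fderiv ℝ (fun θ' =>
            Real.log (polθ θ' (hist (glue hTam Op Of) k) (glue hTam Cp Cf k))) θ
        = ((PP * l ^ k.1) * (contProb pol P H c (List.ofFn fun j => (Of j, Cf j)) *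
              futReward r l (List.ofFn Of))
            + (PP * (past + l ^ k.1 * r ok - l ^ k.1 * (Q - V))) *
                contProb pol P H c (List.ofFn fun j => (Of j, Cf j))) •
            fderiv ℝ (fun θ' => Real.log (polθ θ' H c)) θ := by
      intro Of Cf
      rw [htraj Of Cf, hR Of, hH' Of, hok' Of, hck Cp Cf, ← hc]
      congr 1
      simp only [Afun]
      rw [← hQdef, ← hV]
      ring
    calc (∑ Of : Fin m → 𝒪, ∑ Cf : Fin m → 𝒞,
        (trajProb hT pol P ρ (glue hTam Op Of, glue hTam Cp Cf) *
          ((∑ j : Fin T, l ^ j.1 * r (glue hTam Op Of j)) -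
            l ^ k.1 * Afun pol P r l m (hist (glue hTam Op Of) k)
              (glue hTam Op Of k) (glue hTam Cp Cf k))) •
          fderiv ℝ (fun θ' =>
            Real.log (polθ θ' (hist (glue hTam Op Of) k) (glue hTam Cp Cf k))) θ)
        = ∑ Of : Fin m → 𝒪, ∑ Cf : Fin m → 𝒞,
            ((PP * l ^ k.1) * (contProb pol P H c (List.ofFn fun j => (Of j, Cf j)) *
                futReward r l (List.ofFn Of))
              + (PP * (past + l ^ k.1 * r ok - l ^ k.1 * (Q - V))) *
                  contProb pol P H c (List.ofFn fun j => (Of j, Cf j))) •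
              fderiv ℝ (fun θ' => Real.log (polθ θ' H c)) θ :=
          Finset.sum_congr rfl fun Of _ => Finset.sum_congr rfl fun Cf _ => hterm Of Cf
      _ = (prefProb pol P ρ O0 (glue hTam Cp Cf0) k * pv) •
            fderiv ℝ (fun θ' => Real.log (polθ θ' H c)) θ := by
          simp only [← Finset.sum_smul]
          congr 1
          simp only [Finset.sum_add_distrib, ← Finset.mul_sum]
          rw [hQsum, honesum, hpv, ← hPP]
          ring
  rw [Finset.sum_congr rfl fun Cp _ => hinner Cp]
  -- now split the prefix actions at the last epoch
  set e : 𝒞 ≃ (Fin 1 → 𝒞) :=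
    ⟨fun cc _ => cc, fun f => f 0, fun _ => rfl,
     fun f => funext fun i => by rw [Subsingleton.elim (0 : Fin 1) i]⟩ with he
  rw [sum_glue (rfl : k.1 + 1 = k.1 + 1)]
  refine Finset.sum_eq_zero fun cs _ => ?_
  rw [← Equiv.sum_comp e]
  set Cp0 : Fin (k.1 + 1) → 𝒞 := glue rfl cs (fun _ : Fin 1 => Classical.arbitrary 𝒞) with hCp0
  set B : ℝ := prefProb' pol P ρ O0 (glue hTam Cp0 Cf0) k with hB
  have hcc : ∀ cc : 𝒞, (glue rfl cs (e cc)) ⟨k.1, hkla⟩ = cc :=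
    fun cc => (glue_mk_ge rfl cs (e cc) hkla le_rfl (by omega)).trans rfl
  have hPPc : ∀ cc : 𝒞,
      prefProb pol P ρ O0 (glue hTam (glue rfl cs (e cc)) Cf0) k = B * pol H cc := by
    intro cc
    rw [prefProb, ← hH]
    have h1 : prefProb' pol P ρ O0 (glue hTam (glue rfl cs (e cc)) Cf0) k = B := by
      rw [hB]
      refine prefProb'_congr pol P ρ _ _ _ _ k (fun j _ => rfl) (fun j hj => ?_)
      rw [glue_lt hTam _ Cf0 j (by omega), glue_lt hTam Cp0 Cf0 j (by omega), hCp0,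
        glue_mk_lt rfl cs _ (by omega) hj, glue_mk_lt rfl cs _ (by omega) hj]
    have h2 : glue hTam (glue rfl cs (e cc)) Cf0 k = cc := by
      rw [hck (glue rfl cs (e cc)) Cf0, hcc cc]
    rw [h1, h2]
  have hfin : ∀ cc : 𝒞,
      (prefProb pol P ρ O0 (glue hTam (glue rfl cs (e cc)) Cf0) k * pv) •
          fderiv ℝ (fun θ' => Real.log (polθ θ' H ((glue rfl cs (e cc)) ⟨k.1, hkla⟩))) θ
        = (B * pv) • (pol H cc • fderiv ℝ (fun θ' => Real.log (polθ θ' H cc)) θ) := by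
    intro cc
    rw [hPPc cc, hcc cc, smul_smul]
    congr 1
    ring
  rw [Finset.sum_congr rfl fun cc _ => hfin cc]
  have h4 : ∀ cc : 𝒞, pol H cc • fderiv ℝ (fun θ' => Real.log (polθ θ' H cc)) θ
      = fderiv ℝ (fun θ' => polθ θ' H cc) θ :=
    fun cc => pol_smul_fderiv_log _ (hdiff H cc) θ (hpos θ H cc)
  rw [Finset.sum_congr rfl fun cc _ => congrArg _ (h4 cc), ← Finset.smul_sum,
    sum_fderiv_pol_eq_zero polθ hdiff hsum H θ, smul_zero]

end AuxPG

/-- **Advantage actor-critic policy gradient for the PoMDP** (finite-horizon version of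
Theorem 1). In the finite-horizon PoMDP with finite observation set `𝒪`, finite action
set `𝒞`, horizon `T ≥ 1`, positive and differentiable-in-`θ` parametrized policy
`π_θ(C|H)` summing to one, θ-independent transition kernel `P`, initial distribution `ρ`,
reward `r` and discount `l`: the objective `J(θ)` is differentiable in `θ` and
`∇_θ J(θ) = ∑_τ Pr_θ[τ] ∑_{k=1}^{T} λ^{k-1} A_θ(H_k,C_k) • ∇_θ log π_θ(C_k|H_k)`,
where `A_θ = Q_θ - V_θ` is the advantage function. -/
theorem policy_gradient_advantage_form
    {𝒪 𝒞 : Type*} [Fintype 𝒪] [Fintype 𝒞] [Nonempty 𝒪] [Nonempty 𝒞]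
    {T : ℕ} (hT : 1 ≤ T) {n : ℕ}
    (polθ : (Fin n → ℝ) → List 𝒪 → 𝒞 → ℝ)
    (hdiff : ∀ (H : List 𝒪) (C : 𝒞), Differentiable ℝ (fun θ : Fin n → ℝ => polθ θ H C))
    (hpos : ∀ (θ : Fin n → ℝ) (H : List 𝒪) (C : 𝒞), 0 < polθ θ H C)
    (hsum : ∀ (θ : Fin n → ℝ) (H : List 𝒪), ∑ C : 𝒞, polθ θ H C = 1)
    (P : List 𝒪 → 𝒞 → 𝒪 → ℝ)
    (hP_nonneg : ∀ (H : List 𝒪) (C : 𝒞) (o' : 𝒪), 0 ≤ P H C o')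
    (hP_sum : ∀ (H : List 𝒪) (C : 𝒞), ∑ o' : 𝒪, P H C o' = 1)
    (ρ : 𝒪 → ℝ) (hρ_nonneg : ∀ o : 𝒪, 0 ≤ ρ o) (hρ_sum : ∑ o : 𝒪, ρ o = 1)
    (r : 𝒪 → ℝ) (l : ℝ) :
    Differentiable ℝ (Jobj (𝒪 := 𝒪) (𝒞 := 𝒞) (T := T) hT polθ P ρ r l) ∧
      ∀ θ : Fin n → ℝ,
        fderiv ℝ (Jobj (𝒪 := 𝒪) (𝒞 := 𝒞) (T := T) hT polθ P ρ r l) θ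
          = ∑ τ : (Fin T → 𝒪) × (Fin T → 𝒞),
              trajProb hT (polθ θ) P ρ τ •
                ∑ k : Fin T,
                  (l ^ (k.1) *
                      Afun (polθ θ) P r l (T - 1 - k.1) (hist τ.1 k) (τ.1 k) (τ.2 k)) •
                    fderiv ℝ (fun θ' : Fin n → ℝ =>
                      Real.log (polθ θ' (hist τ.1 k) (τ.2 k))) θ := by
  constructor
  · intro θ
    exact (hasFDerivAt_Jobj hT polθ hdiff hpos P ρ r l θ).differentiableAt
  · intro θ
    rw [(hasFDerivAt_Jobj hT polθ hdiff hpos P ρ r l θ).fderiv]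
    rw [← sub_eq_zero]
    have hterm : ∀ τ : (Fin T → 𝒪) × (Fin T → 𝒞),
        (∑ j : Fin T, l ^ j.1 * r (τ.1 j)) •
            (trajProb hT (polθ θ) P ρ τ •
              ∑ k : Fin T, fderiv ℝ (fun θ' => Real.log (polθ θ' (hist τ.1 k) (τ.2 k))) θ)
          - trajProb hT (polθ θ) P ρ τ •
              ∑ k : Fin T,
                (l ^ k.1 * Afun (polθ θ) P r l (T - 1 - k.1) (hist τ.1 k) (τ.1 k) (τ.2 k)) •
                  fderiv ℝ (fun θ' => Real.log (polθ θ' (hist τ.1 k) (τ.2 k))) θ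
        = ∑ k : Fin T,
            (trajProb hT (polθ θ) P ρ τ *
              ((∑ j : Fin T, l ^ j.1 * r (τ.1 j)) -
                l ^ k.1 * Afun (polθ θ) P r l (T - 1 - k.1) (hist τ.1 k) (τ.1 k) (τ.2 k))) •
              fderiv ℝ (fun θ' => Real.log (polθ θ' (hist τ.1 k) (τ.2 k))) θ := by
      intro τ
      rw [smul_smul, Finset.smul_sum, Finset.smul_sum, ← Finset.sum_sub_distrib]
      refine Finset.sum_congr rfl fun k _ => ?_
      rw [smul_smul, ← sub_smul]
      congr 1
      ring
    rw [← Finset.sum_sub_distrib]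
    rw [Finset.sum_congr rfl fun τ _ => hterm τ]
    rw [Finset.sum_comm]
    exact Finset.sum_eq_zero fun k _ =>
      claim_k hT polθ hdiff hpos hsum P hP_sum ρ r l θ k
end

section
/- Let 𝒪 and 𝒞 be finite nonempty sets and T ≥ 1 a horizon, with histories H_k = (O₁,…,O_k). Let π : ℝⁿ → History → 𝒞 → ℝ be a parametrized policy such that for every history H and action C, θ ↦ π_θ(C|H) is differentiable, π_θ(C|H) > 0, and ∑_{C∈𝒞} π_θ(C|H) = 1 for all θ; let P(O'|H,C) be a θ-independent transition kernel, r : 𝒪 → ℝ a reward, and λ ∈ ℝ. For 1 ≤ k ≤ T define Q_θ(H_k,C_k) as the conditional expected value of ∑_{k'=k}^{T} λ^{k'−k} r(O_{k'}) given (H_k,C_k) under π_θ and P, and V_θ(H_k) = ∑_{C∈𝒞} π_θ(C|H_k) Q_θ(H_k,C). Then for every k < T and history H_k, V_θ(H_k) is differentiable in θ and satisfies the gradient recursion ∇_θ V_θ(H_k) = ∑_{C∈𝒞} π_θ(C|H_k) · Q_θ(H_k,C) • ∇_θ log π_θ(C|H_k) + λ · ∑_{C∈𝒞} ∑_{O'∈𝒪}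 π_θ(C|H_k) P(O'|H_k,C) • ∇_θ V_θ(H_k ⌢ O'), where H_k ⌢ O' is the history H_k extended by observation O'. -/
open Finset

section AuxLemmas

variable {𝒪 𝒞 : Type*} [Fintype 𝒪] [Fintype 𝒞]

lemma sum_cons_equiv (m : ℕ) (F : (Fin (m+1) → 𝒪 × 𝒞) → ℝ) :
    ∑ cont : Fin (m+1) → 𝒪 × 𝒞, F cont
      = ∑ p : (𝒪 × 𝒞) × (Fin m → 𝒪 × 𝒞), F (Fin.cons p.1 p.2) := by
  rw [← (Fin.consEquiv (fun _ : Fin (m+1) => 𝒪 × 𝒞)).sum_comp F]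
  rfl

lemma ofFn_cons (m : ℕ) (a : 𝒪 × 𝒞) (f : Fin m → 𝒪 × 𝒞) :
    List.ofFn (Fin.cons a f : Fin (m+1) → 𝒪 × 𝒞) = a :: List.ofFn f := by
  simp [List.ofFn_succ]

lemma contProb_sum_one (pol : List 𝒪 → 𝒞 → ℝ) (P : List 𝒪 → 𝒞 → 𝒪 → ℝ)
    (hsum : ∀ H, ∑ C, pol H C = 1) (hP : ∀ H C, ∑ o', P H C o' = 1) :
    ∀ (m : ℕ) (H : List 𝒪) (C : 𝒞),
      ∑ cont : Fin m → 𝒪 × 𝒞, contProb pol P H C (List.ofFn cont) = 1 := by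
  intro m
  induction m with
  | zero => intro H C; simp [contProb]
  | succ m ih =>
    intro H C
    rw [sum_cons_equiv]
    rw [Fintype.sum_prod_type]
    simp only [ofFn_cons, contProb]
    rw [Fintype.sum_prod_type]
    have : ∀ (o' : 𝒪) (C' : 𝒞),
        ∑ f : Fin m → 𝒪 × 𝒞,
          P H C o' * pol (H ++ [o']) C' * contProb pol P (H ++ [o']) C' (List.ofFn f)
        = P H C o' * pol (H ++ [o']) C' := by
      intro o' C'
      rw [← Finset.mul_sum, ih]
      ring
    simp only [this, ← Finset.mul_sum, hsum, hP, mul_one]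

lemma Qfun_succ (pol : List 𝒪 → 𝒞 → ℝ) (P : List 𝒪 → 𝒞 → 𝒪 → ℝ) (r : 𝒪 → ℝ) (l : ℝ)
    (hsum : ∀ H, ∑ C, pol H C = 1) (hP : ∀ H C, ∑ o', P H C o' = 1)
    (m : ℕ) (H : List 𝒪) (o : 𝒪) (C : 𝒞) :
    Qfun pol P r l (m+1) H o C
      = r o + l * ∑ o' : 𝒪, P H C o' * Vfun pol P r l m (H ++ [o']) o' := by
  unfold Qfun
  rw [sum_cons_equiv]
  rw [Fintype.sum_prod_type]
  congr 1
  have key : ∀ (o' : 𝒪) (C' : 𝒞),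
      ∑ f : Fin m → 𝒪 × 𝒞,
        contProb pol P H C (List.ofFn (Fin.cons (o', C') f))
          * futReward r l (List.ofFn fun j => ((Fin.cons (o', C') f : Fin (m+1) → 𝒪 × 𝒞) j).1)
      = P H C o' * pol (H ++ [o']) C' * (l * (r o'
          + ∑ f : Fin m → 𝒪 × 𝒞,
              contProb pol P (H ++ [o']) C' (List.ofFn f)
                * futReward r l (List.ofFn fun j => (f j).1))) := by
    intro o' C'
    have hl : ∀ f : Fin m → 𝒪 × 𝒞,
        (List.ofFn fun j => ((Fin.cons (o', C') f : Fin (m+1) → 𝒪 × 𝒞) j).1)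
          = o' :: List.ofFn fun j => (f j).1 := by
      intro f; simp [List.ofFn_succ]
    simp only [ofFn_cons, contProb, hl, futReward]
    rw [mul_add, Finset.mul_sum]
    have h1 : ∑ f : Fin m → 𝒪 × 𝒞,
        P H C o' * pol (H ++ [o']) C' * contProb pol P (H ++ [o']) C' (List.ofFn f)
          * (l * r o')
        = P H C o' * pol (H ++ [o']) C' * (l * r o') := by
      rw [← Finset.sum_mul, ← Finset.mul_sum, contProb_sum_one pol P hsum hP]
      ring
    rw [Finset.sum_congr rfl (fun f _ => by ring :
        ∀ f ∈ Finset.univ, P H C o' * pol (H ++ [o']) C' * contProb pol P (H ++ [o']) C' (List.ofFn f)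
          * (l * (r o' + futReward r l (List.ofFn fun j => (f j).1)))
        = P H C o' * pol (H ++ [o']) C' * contProb pol P (H ++ [o']) C' (List.ofFn f) * (l * r o')
          + P H C o' * pol (H ++ [o']) C'
              * (l * (contProb pol P (H ++ [o']) C' (List.ofFn f)
                  * futReward r l (List.ofFn fun j => (f j).1))))]
    rw [Finset.sum_add_distrib, h1, ← Finset.mul_sum, ← Finset.mul_sum]
    ring
  rw [Fintype.sum_prod_type]
  simp only [key]
  unfold Vfun Qfun
  rw [Finset.mul_sum]
  refine Finset.sum_congr rfl fun o' _ => ?_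
  rw [Finset.mul_sum, Finset.mul_sum]
  refine Finset.sum_congr rfl fun C' _ => ?_
  ring

variable {n : ℕ}

lemma diff_contProb (polθ : (Fin n → ℝ) → List 𝒪 → 𝒞 → ℝ)
    (hdiff : ∀ H C, Differentiable ℝ (fun θ => polθ θ H C)) (P : List 𝒪 → 𝒞 → 𝒪 → ℝ) :
    ∀ (L : List (𝒪 × 𝒞)) (H : List 𝒪) (C : 𝒞),
      Differentiable ℝ (fun θ => contProb (polθ θ) P H C L) := by
  intro L
  induction L with
  | nil =>
    intro H C
    simp only [contProb]
    exact differentiable_const 1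
  | cons a rest ih =>
    intro H C
    obtain ⟨o', C'⟩ := a
    simp only [contProb]
    exact ((differentiable_const _).mul (hdiff _ _)).mul (ih _ _)

lemma diff_Q (polθ : (Fin n → ℝ) → List 𝒪 → 𝒞 → ℝ)
    (hdiff : ∀ H C, Differentiable ℝ (fun θ => polθ θ H C)) (P : List 𝒪 → 𝒞 → 𝒪 → ℝ)
    (r : 𝒪 → ℝ) (l : ℝ) (m : ℕ) (H : List 𝒪) (o : 𝒪) (C : 𝒞) :
    Differentiable ℝ (fun θ => Qfun (polθ θ) P r l m H o C) := by
  unfold Qfun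
  exact (differentiable_const _).add (Differentiable.fun_sum fun cont _ =>
    (diff_contProb polθ hdiff P _ _ _).mul (differentiable_const _))

lemma diff_V (polθ : (Fin n → ℝ) → List 𝒪 → 𝒞 → ℝ)
    (hdiff : ∀ H C, Differentiable ℝ (fun θ => polθ θ H C)) (P : List 𝒪 → 𝒞 → 𝒪 → ℝ)
    (r : 𝒪 → ℝ) (l : ℝ) (m : ℕ) (H : List 𝒪) (o : 𝒪) :
    Differentiable ℝ (fun θ => Vfun (polθ θ) P r l m H o) := by
  unfold Vfun
  exact Differentiable.fun_sum fun C _ => (hdiff _ _).mul (diff_Q polθ hdiff P r l m H o C)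

end AuxLemmas

/-- **Gradient recursion for the value function** (the recursive identity (17) at the heart
of the unrolling argument in the proof of Theorem 1). In the finite-horizon PoMDP with
finite observation set `𝒪`, finite action set `𝒞`, horizon `T ≥ 1`, positive and
differentiable-in-`θ` parametrized policy `π_θ(C|H)` summing to one, θ-independent
transition kernel `P`, reward `r` and discount `l`: for every epoch `k < T` and history
`H_k`, the map `θ ↦ V_θ(H_k)` is differentiable and
`∇_θ V_θ(H_k) = ∑_C π_θ(C|H_k) Q_θ(H_k,C) • ∇_θ log π_θ(C|H_k)
  + λ • ∑_C ∑_{O'} π_θ(C|H_k) P(O'|H_k,C) • ∇_θ V_θ(H_k ⌢ O')`. -/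
theorem value_gradient_recursion
    {𝒪 𝒞 : Type*} [Fintype 𝒪] [Fintype 𝒞] [Nonempty 𝒪] [Nonempty 𝒞]
    {T : ℕ} (hT : 1 ≤ T) {n : ℕ}
    (polθ : (Fin n → ℝ) → List 𝒪 → 𝒞 → ℝ)
    (hdiff : ∀ (H : List 𝒪) (C : 𝒞), Differentiable ℝ (fun θ : Fin n → ℝ => polθ θ H C))
    (hpos : ∀ (θ : Fin n → ℝ) (H : List 𝒪) (C : 𝒞), 0 < polθ θ H C)
    (hsum : ∀ (θ : Fin n → ℝ) (H : List 𝒪), ∑ C : 𝒞, polθ θ H C = 1)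
    (P : List 𝒪 → 𝒞 → 𝒪 → ℝ)
    (hP_nonneg : ∀ (H : List 𝒪) (C : 𝒞) (o' : 𝒪), 0 ≤ P H C o')
    (hP_sum : ∀ (H : List 𝒪) (C : 𝒞), ∑ o' : 𝒪, P H C o' = 1)
    (r : 𝒪 → ℝ) (l : ℝ)
    (O : Fin T → 𝒪) (k : Fin T) (hk : k.1 + 1 < T) :
    Differentiable ℝ
        (fun θ' : Fin n → ℝ => Vfun (polθ θ') P r l (T - 1 - k.1) (hist O k) (O k)) ∧
      ∀ θ : Fin n → ℝ,
        fderiv ℝ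
            (fun θ' : Fin n → ℝ => Vfun (polθ θ') P r l (T - 1 - k.1) (hist O k) (O k)) θ
          = (∑ C : 𝒞,
                (polθ θ (hist O k) C *
                    Qfun (polθ θ) P r l (T - 1 - k.1) (hist O k) (O k) C) •
                  fderiv ℝ (fun θ' : Fin n → ℝ => Real.log (polθ θ' (hist O k) C)) θ)
            + l • ∑ C : 𝒞, ∑ o' : 𝒪,
                (polθ θ (hist O k) C * P (hist O k) C o') •
                  fderiv ℝ (fun θ' : Fin n → ℝ =>
                    Vfun (polθ θ') P r l (T - 1 - (k.1 + 1)) (hist O k ++ [o']) o') θ := by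
  set H := hist O k with hH
  set o := O k with ho
  set m : ℕ := T - 1 - (k.1 + 1) with hm'
  have hm : T - 1 - k.1 = m + 1 := by omega
  rw [hm]
  constructor
  · exact diff_V polθ hdiff P r l (m+1) H o
  intro θ
  -- derivatives
  set Dpol : 𝒞 → (Fin n → ℝ) →L[ℝ] ℝ := fun C => fderiv ℝ (fun θ' => polθ θ' H C) θ with hDpol
  set DV : 𝒪 → (Fin n → ℝ) →L[ℝ] ℝ :=
    fun o' => fderiv ℝ (fun θ' => Vfun (polθ θ') P r l m (H ++ [o']) o') θ with hDV
  have hVd : ∀ o' : 𝒪, HasFDerivAt (fun θ' => Vfun (polθ θ') P r l m (H ++ [o']) o')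
      (DV o') θ := fun o' => (diff_V polθ hdiff P r l m (H ++ [o']) o' θ).hasFDerivAt
  have hQd : ∀ C : 𝒞, HasFDerivAt (fun θ' => Qfun (polθ θ') P r l (m+1) H o C)
      (l • ∑ o' : 𝒪, P H C o' • DV o') θ := by
    intro C
    have heq : (fun θ' => Qfun (polθ θ') P r l (m+1) H o C)
        = fun θ' => r o + l * ∑ o' : 𝒪, P H C o' * Vfun (polθ θ') P r l m (H ++ [o']) o' := by
      funext θ'
      exact Qfun_succ (polθ θ') P r l (hsum θ') hP_sum m H o C
    rw [heq]
    have : HasFDerivAt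
        (fun θ' => ∑ o' : 𝒪, P H C o' * Vfun (polθ θ') P r l m (H ++ [o']) o')
        (∑ o' : 𝒪, P H C o' • DV o') θ :=
      HasFDerivAt.fun_sum fun o' _ => (hVd o').const_mul (P H C o')
    exact (this.const_mul l).const_add (r o)
  have hpold : ∀ C : 𝒞, HasFDerivAt (fun θ' => polθ θ' H C) (Dpol C) θ :=
    fun C => (hdiff H C θ).hasFDerivAt
  have htot : HasFDerivAt (fun θ' => Vfun (polθ θ') P r l (m+1) H o)
      (∑ C : 𝒞, (polθ θ H C • (l • ∑ o' : 𝒪, P H C o' • DV o')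
        + Qfun (polθ θ) P r l (m+1) H o C • Dpol C)) θ := by
    have : (fun θ' => Vfun (polθ θ') P r l (m+1) H o)
        = fun θ' => ∑ C : 𝒞, polθ θ' H C * Qfun (polθ θ') P r l (m+1) H o C := rfl
    rw [this]
    exact HasFDerivAt.fun_sum fun C _ => (hpold C).mul (hQd C)
  rw [htot.fderiv]
  have hlog : ∀ C : 𝒞, fderiv ℝ (fun θ' => Real.log (polθ θ' H C)) θ
      = (polθ θ H C)⁻¹ • Dpol C :=
    fun C => ((hpold C).log (ne_of_gt (hpos θ H C))).fderiv
  simp only [hlog]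
  rw [Finset.sum_add_distrib, add_comm]
  congr 1
  · refine Finset.sum_congr rfl fun C _ => ?_
    rw [smul_smul]
    have hne : polθ θ H C ≠ 0 := ne_of_gt (hpos θ H C)
    congr 1
    field_simp
  · rw [Finset.smul_sum]
    refine Finset.sum_congr rfl fun C _ => ?_
    rw [smul_comm, Finset.smul_sum]
    congr 1
    refine Finset.sum_congr rfl fun o' _ => ?_
    rw [smul_smul]
end
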